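/- If σ' is a strategy of Player 0 in the threshold game G_b that is positional and winning from (v*, init(v*)) for the parity condition, then along any consistent play from (v*, init(v*)) the overflow counter values o_j are monotonically non-decreasing and strictly below n for all j. -/

import Mathlib

/-! Saturated vertices (`o = n`) are closed under moves and all carry the odd color 1, so a play
that reaches one has eventually constant color 1 and violates the parity condition; hence a play
won by Player 0 never saturates the counter. Monotonicity holds edgewise, since the capped
increment never lowers a counter that is already at most `n`. -/

variable {S : Type*}

/-- The (max-) parity condition: the maximal color occurring infinitely often
is even. -/
def SatParity (Ω : S → ℕ) (ρ : ℕ → S) : Prop :=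
  ∃ c, Even c ∧ {j | Ω (ρ j) = c}.Infinite ∧ ∀ c' > c, {j | Ω (ρ j) = c'}.Finite

open Filter

theorem SatParity.even_of_eventually_eq {Ω : S → ℕ} {ρ : ℕ → S} {c : ℕ}
    (hpar : SatParity Ω ρ) (hc : ∀ᶠ j in atTop, Ω (ρ j) = c) : Even c := by
  obtain ⟨c', hc'_even, hc'_inf, -⟩ := hpar
  obtain ⟨j, hj', hj⟩ :=
    ((Nat.frequently_atTop_iff_infinite.mpr hc'_inf).and_eventually hc).exists
  exact (hj.symm.trans hj') ▸ hc'_even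

theorem eventually_of_closed_under_edges {E : S → S → Prop} {p : S → Prop} {ρ : ℕ → S}
    (hclosed : ∀ s s', p s → E s s' → p s') (hplay : ∀ j, E (ρ j) (ρ (j + 1)))
    {j : ℕ} (hj : p (ρ j)) : ∀ᶠ k in atTop, p (ρ k) :=
  eventually_atTop.mpr ⟨j, fun _ hk =>
    Nat.le_induction hj (fun k _ ih => hclosed _ _ ih (hplay k)) _ hk⟩

theorem overflow_counter_bounded_general (S0 : Set S) (E : S → S → Prop)
    (Ω' : S → ℕ) (o : S → ℕ) (n : ℕ) (σ : S → S) (s0 : S)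
    (hcap : ∀ s, o s ≤ n)
    (hstep : ∀ s s', E s s' → o s' = o s ∨ o s' = min (o s + 1) n)
    (hsink : ∀ s s', o s = n → E s s' → o s' = n)
    (hcol : ∀ s, o s = n → Ω' s = 1)
    (hwin : ∀ ρ : ℕ → S, (∀ j, E (ρ j) (ρ (j + 1))) → ρ 0 = s0 →
      (∀ j, ρ j ∈ S0 → ρ (j + 1) = σ (ρ j)) → SatParity Ω' ρ)
    (ρ : ℕ → S) (hplay : ∀ j, E (ρ j) (ρ (j + 1))) (h0 : ρ 0 = s0)
    (hcons : ∀ j, ρ j ∈ S0 → ρ (j + 1) = σ (ρ j)) :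
    ∀ j, o (ρ j) ≤ o (ρ (j + 1)) ∧ o (ρ j) < n := by
  intro j
  constructor
  · have := hcap (ρ j)
    rcases hstep _ _ (hplay j) with h | h <;> omega
  · by_contra! hj
    have hsat : ∀ᶠ k in atTop, o (ρ k) = n :=
      eventually_of_closed_under_edges hsink hplay (le_antisymm (hcap _) hj)
    have heven : Even 1 :=
      (hwin ρ hplay h0 hcons).even_of_eventually_eq (hsat.mono fun k hk => hcol _ hk)
    exact Nat.not_even_one heven

/-- in the threshold game `G_b` (whose vertices carry an overflow
counter `o` bounded by `n` that either stays equal or increments capped at `n`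
along every edge, such that vertices with saturated counter `o = n` form a sink
component of odd color 1), if `σ` is a positional strategy of Player 0 (with
vertex set `S0`) that is winning from the initial vertex `s0` (with `o s0 = 0`)
for the parity condition, then along any play consistent with `σ` from `s0` the
overflow counter values are monotonically non-decreasing and strictly below `n`. -/
theorem overflow_counter_bounded (S0 : Set S) (E : S → S → Prop)
    (Ω' : S → ℕ) (o : S → ℕ) (n : ℕ) (hn : 0 < n) (σ : S → S) (s0 : S)
    (hcap : ∀ s, o s ≤ n)
    (hstep : ∀ s s', E s s' → o s' = o s ∨ o s' = min (o s + 1) n)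
    (hsink : ∀ s s', o s = n → E s s' → o s' = n)
    (hcol : ∀ s, o s = n → Ω' s = 1)
    (hleg : ∀ s ∈ S0, E s (σ s))
    (hs0 : o s0 = 0)
    (hwin : ∀ ρ : ℕ → S, (∀ j, E (ρ j) (ρ (j + 1))) → ρ 0 = s0 →
      (∀ j, ρ j ∈ S0 → ρ (j + 1) = σ (ρ j)) → SatParity Ω' ρ)
    (ρ : ℕ → S) (hplay : ∀ j, E (ρ j) (ρ (j + 1))) (h0 : ρ 0 = s0)
    (hcons : ∀ j, ρ j ∈ S0 → ρ (j + 1) = σ (ρ j)) :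
    ∀ j, o (ρ j) ≤ o (ρ (j + 1)) ∧ o (ρ j) < n :=
  overflow_counter_bounded_general S0 E Ω' o n σ s0 hcap hstep hsink hcol hwin ρ hplay h0 hcons
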